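/- Let $f:\mathbb{R}^d\to\mathbb{R}$ be $L$-smooth and $f_\nu(x) = \mathbb{E}_{u\sim U_B}[f(x+\nu u)]$ its smoothing over the unit ball. Then for any $x\in\mathbb{R}^d$, $\|\nabla f_\nu(x) - \nabla f(x)\| \le \frac{\nu L d}{2}$. -/

import Mathlib

/-!
Since `∇f_ν(x) - ∇f(x)` is the average over the unit ball of `∇f(x + νu) - ∇f(x)`, whose norm is
at most `νL‖u‖`, the error is at most `νL` times the mean of `‖u‖` over the unit ball. Integrating
in polar coordinates, that mean is `d / (d + 1) ≤ d / 2`.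
-/

open MeasureTheory Metric Set

section Average

variable {α E : Type*} [MeasurableSpace α] [NormedAddCommGroup E] [NormedSpace ℝ E]
  [CompleteSpace E] {μ : Measure α}

theorem average_const_mul (r : ℝ) (f : α → ℝ) :
    ⨍ a, r * f a ∂μ = r * ⨍ a, f a ∂μ := by
  simp only [average_eq, integral_const_mul, smul_eq_mul]
  ring

theorem norm_average_sub_le_average [IsFiniteMeasure μ] [NeZero μ] {g : α → E} {b : α → ℝ}
    (hg : Integrable g μ) (hb : Integrable b μ) (c : E) (hgb : ∀ a, ‖g a - c‖ ≤ b a) :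
    ‖(⨍ a, g a ∂μ) - c‖ ≤ ⨍ a, b a ∂μ := by
  simp only [average_eq']
  set P := (μ univ)⁻¹ • μ
  have hgP : Integrable g P := hg.smul_measure (ENNReal.inv_ne_top.2 (NeZero.ne _))
  have hbP : Integrable b P := hb.smul_measure (ENNReal.inv_ne_top.2 (NeZero.ne _))
  calc ‖(∫ a, g a ∂P) - c‖ = ‖∫ a, (g a - c) ∂P‖ := by
        rw [integral_sub hgP (integrable_const c), integral_const, probReal_univ, one_smul]
    _ ≤ ∫ a, b a ∂P := norm_integral_le_of_norm_le hbP (.of_forall hgb)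

end Average

theorem setAverage_norm_ball_zero_one {E : Type*} [NormedAddCommGroup E] [NormedSpace ℝ E]
    [MeasurableSpace E] [BorelSpace E] [FiniteDimensional ℝ E] [Nontrivial E]
    (μ : Measure E) [μ.IsAddHaarMeasure] :
    ⨍ x in ball (0 : E) 1, ‖x‖ ∂μ = Module.finrank ℝ E / (Module.finrank ℝ E + 1) := by
  have hradial := integral_fun_norm_addHaar μ (fun r : ℝ => (Iio (1 : ℝ)).indicator id r)
  set n := Module.finrank ℝ E
  have hn : 0 < n := Module.finrank_pos
  have hlhs : ∫ x, (Iio (1 : ℝ)).indicator id ‖x‖ ∂μ = ∫ x in ball (0 : E) 1, ‖x‖ ∂μ := by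
    rw [← integral_indicator measurableSet_ball]
    congr 1 with x
    by_cases h : ‖x‖ < 1 <;> simp [h]
  have hrhs : ∫ r in Ioi (0 : ℝ), r ^ (n - 1) • (Iio (1 : ℝ)).indicator id r = 1 / (n + 1) := by
    have hpow : ∀ r : ℝ, r ^ (n - 1) • (Iio (1 : ℝ)).indicator id r
        = (Iio (1 : ℝ)).indicator (fun r => r ^ n) r := by
      intro r
      by_cases h : r < 1
      · simp [h, ← pow_succ, Nat.sub_add_cancel hn]
      · simp [h]
    simp_rw [hpow]
    rw [integral_indicator measurableSet_Iio, Measure.restrict_restrict measurableSet_Iio,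
      Iio_inter_Ioi, ← integral_Ioc_eq_integral_Ioo, ← intervalIntegral.integral_of_le zero_le_one,
      integral_pow]
    simp
  have hμ : μ.real (ball (0 : E) 1) ≠ 0 :=
    ENNReal.toReal_ne_zero.2 ⟨(measure_ball_pos μ 0 one_pos).ne', measure_ball_lt_top.ne⟩
  rw [hlhs, hrhs] at hradial
  rw [setAverage_eq, hradial, nsmul_eq_mul, smul_eq_mul, smul_eq_mul]
  field_simp

theorem smoothing_gradient_error_general {d : ℕ} (f fν : EuclideanSpace ℝ (Fin d) → ℝ)
    (L ν : ℝ) (hν : 0 < ν) (hL : 0 < L)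
    (hlip : ∀ x y, ‖gradient f x - gradient f y‖ ≤ L * ‖x - y‖)
    (hgradν : ∀ y, gradient fν y
      = ⨍ u in Metric.ball (0 : EuclideanSpace ℝ (Fin d)) 1, gradient f (y + ν • u))
    (x : EuclideanSpace ℝ (Fin d)) :
    ‖gradient fν x - gradient f x‖ ≤ ν * L * d / 2 := by
  rcases Nat.eq_zero_or_pos d with rfl | hd
  · simp [Subsingleton.elim (gradient fν x) (gradient f x)]
  have : Nontrivial (EuclideanSpace ℝ (Fin d)) := by
    rw [← Module.finrank_pos_iff (R := ℝ), finrank_euclideanSpace_fin]; exact hd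
  have : Fact (volume (ball (0 : EuclideanSpace ℝ (Fin d)) 1) < ⊤) := ⟨measure_ball_lt_top⟩
  have : NeZero (volume.restrict (ball (0 : EuclideanSpace ℝ (Fin d)) 1)) :=
    ⟨by simpa using (measure_ball_pos volume (0 : EuclideanSpace ℝ (Fin d)) one_pos).ne'⟩
  have hgrad : LipschitzWith L.toNNReal (gradient f) := .of_dist_le_mul fun y z => by
    simpa [dist_eq_norm, hL.le] using hlip y z
  have hshift : ∀ u, ‖gradient f (x + ν • u) - gradient f x‖ ≤ ν * L * ‖u‖ := fun u => by
    simpa [norm_smul, abs_of_pos hν, mul_comm, mul_left_comm, mul_assoc] using hlip (x + ν • u) x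
  have hintegrable {F : Type} [NormedAddCommGroup F] {g : EuclideanSpace ℝ (Fin d) → F}
      (hg : Continuous g) : IntegrableOn g (ball 0 1) :=
    (hg.locallyIntegrable.integrableOn_isCompact (isCompact_closedBall 0 1)).mono_set
      ball_subset_closedBall
  have hd1 : (1 : ℝ) ≤ d := by exact_mod_cast hd
  calc ‖gradient fν x - gradient f x‖
      ≤ ⨍ u in ball (0 : EuclideanSpace ℝ (Fin d)) 1, ν * L * ‖u‖ := by
        rw [hgradν]
        exact norm_average_sub_le_average (hintegrable (hgrad.continuous.comp (by fun_prop)))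
          (hintegrable (by fun_prop)) _ hshift
    _ = ν * L * (d / (d + 1)) := by
        rw [average_const_mul, setAverage_norm_ball_zero_one, finrank_euclideanSpace_fin]
    _ ≤ ν * L * d / 2 := by
        rw [mul_div_assoc]
        gcongr
        linarith

/-- Gradient error of the uniform smoothing over the unit ball:
`‖∇f_ν(x) - ∇f(x)‖ ≤ ν L d / 2`, where `∇f_ν(x) = 𝔼_{u ∼ U_B}[∇f(x + ν u)]`. -/
theorem smoothing_gradient_error {d : ℕ} (f fν : EuclideanSpace ℝ (Fin d) → ℝ)
    (L ν : ℝ) (hν : 0 < ν) (hL : 0 < L)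
    (hdiff : Differentiable ℝ f) (hdiffν : Differentiable ℝ fν)
    (hlip : ∀ x y, ‖gradient f x - gradient f y‖ ≤ L * ‖x - y‖)
    (hfν : ∀ y, fν y = ⨍ u in Metric.ball (0 : EuclideanSpace ℝ (Fin d)) 1, f (y + ν • u))
    (hgradν : ∀ y, gradient fν y
      = ⨍ u in Metric.ball (0 : EuclideanSpace ℝ (Fin d)) 1, gradient f (y + ν • u))
    (x : EuclideanSpace ℝ (Fin d)) :
    ‖gradient fν x - gradient f x‖ ≤ ν * L * d / 2 :=
  smoothing_gradient_error_general f fν L ν hν hL hlip hgradν x
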